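/- Fix λ > 0 with λ ≠ 1/2. For each d ≥ 1 let N_d = ⌈d/λ⌉, and let p_d denote the probability that N_d independent samples from the standard Gaussian measure N(0, I_d) on ℝ^d are linearly separable from the origin. Then p_d → 1 as d → ∞ if λ > 1/2, and p_d → 0 as d → ∞ if λ < 1/2. -/

import Mathlib

open MeasureTheory ProbabilityTheory Real Filter Module Finset
open scoped ENNReal NNReal

attribute [local instance 10] Classical.propDecidable

noncomputable def sgn (b : Bool) : ℝ := if b then 1 else -1

def Rea {E : Type*} [AddCommGroup E] [Module ℝ E] {N : ℕ} (v : Fin N → E)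
    (ε : Fin N → Bool) : Prop :=
  ∃ f : Module.Dual ℝ E, ∀ i, 0 < sgn (ε i) * f (v i)

def Rea' {d N : ℕ} (x : Fin N → Fin d → ℝ) (ε : Fin N → Bool) : Prop :=
  ∃ S : Fin d → ℝ, ∀ i, 0 < sgn (ε i) * ∑ j, S j * x i j

lemma rea'_iff_rea {d N : ℕ} (x : Fin N → Fin d → ℝ) (ε : Fin N → Bool) :
    Rea' x ε ↔ Rea x ε := by
  constructor
  · rintro ⟨S, hS⟩
    refine ⟨∑ j, S j • (LinearMap.proj j : (Fin d → ℝ) →ₗ[ℝ] ℝ), fun i => ?_⟩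
    have : (∑ j, S j • (LinearMap.proj j : (Fin d → ℝ) →ₗ[ℝ] ℝ)) (x i)
        = ∑ j, S j * x i j := by
      simp [LinearMap.sum_apply]
    rw [this]
    exact hS i
  · rintro ⟨f, hf⟩
    refine ⟨fun j => f (Pi.single j 1), fun i => ?_⟩
    have hx : x i = ∑ j, (x i j) • (Pi.single j 1 : Fin d → ℝ) := by
      funext k
      simp [Finset.sum_apply, Pi.single_apply]
    have : ∑ j, f (Pi.single j 1) * x i j = f (x i) := by
      conv_rhs => rw [hx]
      rw [map_sum]
      congr 1
      funext j
      rw [_root_.map_smul]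
      simp [mul_comm]
    rw [this]
    exact hf i

lemma isOpen_rea' {d N : ℕ} (ε : Fin N → Bool) :
    IsOpen {x : Fin N → Fin d → ℝ | Rea' x ε} := by
  have h : {x : Fin N → Fin d → ℝ | Rea' x ε}
      = ⋃ S : Fin d → ℝ, ⋂ i, {x | 0 < sgn (ε i) * ∑ j, S j * x i j} := by
    ext x
    simp [Rea', Set.mem_iUnion, Set.mem_iInter]
  rw [h]
  refine isOpen_iUnion fun S => isOpen_iInter_of_finite fun i => ?_
  have hc : Continuous fun x : Fin N → Fin d → ℝ => sgn (ε i) * ∑ j, S j * x i j :=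
    continuous_const.mul (continuous_finset_sum _ fun j _ =>
      continuous_const.mul ((continuous_apply j).comp (continuous_apply i)))
  exact isOpen_lt continuous_const hc

noncomputable def gmeas (d N : ℕ) : Measure (Fin N → Fin d → ℝ) :=
  Measure.pi fun _ : Fin N => (Measure.pi fun _ : Fin d => gaussianReal 0 1)

instance gmeas_prob (d N : ℕ) : IsProbabilityMeasure (gmeas d N) := by
  unfold gmeas; infer_instance

lemma measurePreserving_flip {d N : ℕ} (ε : Fin N → Bool) :
    MeasurePreserving (fun x : Fin N → Fin d → ℝ => fun i j => sgn (ε i) * x i j)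
      (gmeas d N) (gmeas d N) := by
  refine measurePreserving_pi (fun _ : Fin N => (Measure.pi fun _ : Fin d => gaussianReal 0 1))
    (fun _ : Fin N => (Measure.pi fun _ : Fin d => gaussianReal 0 1))
    (f := fun i y j => sgn (ε i) * y j) (fun i => ?_)
  refine measurePreserving_pi (fun _ : Fin d => gaussianReal 0 1)
    (fun _ : Fin d => gaussianReal 0 1) (f := fun _ r => sgn (ε i) * r) (fun j => ?_)
  refine ⟨measurable_const_mul _, ?_⟩
  have h := gaussianReal_map_const_mul (μ := 0) (v := 1) (sgn (ε i))
  have h2 : (⟨(sgn (ε i))^2, sq_nonneg _⟩ : NNReal) * 1 = 1 := by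
    ext
    cases (ε i) <;> norm_num [sgn]
  rw [mul_zero] at h
  rw [h]; congr 1

lemma mul_sum_flip {d N : ℕ} (S : Fin d → ℝ) (x : Fin N → Fin d → ℝ) (c : ℝ) (i : Fin N) :
    c * ∑ j, S j * x i j = ∑ j, S j * (c * x i j) := by
  rw [Finset.mul_sum]
  congr 1
  funext j
  ring

lemma flip_preimage {d N : ℕ} (ε : Fin N → Bool) :
    (fun x : Fin N → Fin d → ℝ => fun i j => sgn (ε i) * x i j) ⁻¹'
        {x : Fin N → Fin d → ℝ | Rea' x (fun _ => true)}
      = {x : Fin N → Fin d → ℝ | Rea' x ε} := by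
  ext x
  simp only [Set.mem_preimage, Set.mem_setOf_eq, Rea', sgn, if_pos, one_mul]
  constructor
  · rintro ⟨S, hS⟩
    refine ⟨S, fun i => ?_⟩
    have := hS i
    rw [show (if ε i = true then (1:ℝ) else -1) * ∑ j, S j * x i j
        = ∑ j, S j * ((if ε i = true then (1:ℝ) else -1) * x i j) from mul_sum_flip S x _ i]
    simpa using this
  · rintro ⟨S, hS⟩
    refine ⟨S, fun i => ?_⟩
    have := hS i
    rw [show (if ε i = true then (1:ℝ) else -1) * ∑ j, S j * x i j
        = ∑ j, S j * ((if ε i = true then (1:ℝ) else -1) * x i j) from mul_sum_flip S x _ i]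
        at this
    simpa using this

lemma gmeas_rea' {d N : ℕ} (ε : Fin N → Bool) :
    gmeas d N {x | Rea' x ε} = gmeas d N {x | Rea' x (fun _ => true)} := by
  rw [← flip_preimage ε]
  exact (measurePreserving_flip ε).measure_preimage
    (isOpen_rea' (fun _ => true)).measurableSet.nullMeasurableSet

-- ## Almost-sure general position

def GenPos {E : Type*} [AddCommGroup E] [Module ℝ E] {ι : Type*} (d : ℕ) (v : ι → E) : Prop :=
  ∀ (s : Finset ι) (c : ι → ℝ), s.card ≤ d → (∑ j ∈ s, c j • v j) = 0 → ∀ j ∈ s, c j = 0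

lemma mem_span_iff_rat {d : ℕ} {ι : Type*} [Fintype ι] (w : ι → (Fin d → ℝ)) (a : Fin d → ℝ) :
    a ∈ Submodule.span ℝ (Set.range w) ↔
      ∀ n : ℕ, ∃ c : ι → ℚ, dist a (∑ j, (c j : ℝ) • w j) < 1/(n+1) := by
  constructor
  · intro ha n
    obtain ⟨cr, hcr⟩ := (Submodule.mem_span_range_iff_exists_fun ℝ).1 ha
    set B : ℝ := ∑ j, ‖w j‖ with hB
    have hB0 : 0 ≤ B := Finset.sum_nonneg fun j _ => norm_nonneg _
    set δ : ℝ := (1/(n+1)) / (B + 1) with hδ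
    have hδ0 : 0 < δ := by positivity
    choose q hq using fun j => exists_rat_near (K := ℝ) (cr j) hδ0
    refine ⟨q, ?_⟩
    have hdiff : a - ∑ j, (q j : ℝ) • w j = ∑ j, (cr j - q j) • w j := by
      rw [← hcr, ← Finset.sum_sub_distrib]
      congr 1
      funext j
      rw [sub_smul]
    rw [dist_eq_norm, hdiff]
    calc ‖∑ j, (cr j - (q j : ℝ)) • w j‖ ≤ ∑ j, ‖(cr j - (q j : ℝ)) • w j‖ :=
        norm_sum_le _ _
      _ ≤ ∑ j, δ * ‖w j‖ := Finset.sum_le_sum fun j _ => by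
          rw [norm_smul]
          exact mul_le_mul_of_nonneg_right
            (le_of_lt (by simpa [Real.norm_eq_abs] using hq j)) (norm_nonneg _)
      _ = δ * B := by rw [← Finset.mul_sum]
      _ < δ * (B + 1) := by linarith
      _ = 1/(n+1) := by rw [hδ]; field_simp
  · intro h
    have hclosed : IsClosed ((Submodule.span ℝ (Set.range w) : Submodule ℝ (Fin d → ℝ)) : Set (Fin d → ℝ)) :=
      Submodule.closed_of_finiteDimensional _
    have : a ∈ closure ((Submodule.span ℝ (Set.range w) : Submodule ℝ (Fin d → ℝ)) : Set (Fin d → ℝ)) := by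
      rw [Metric.mem_closure_iff]
      intro ε hε
      obtain ⟨n, hn⟩ := exists_nat_one_div_lt hε
      obtain ⟨c, hc⟩ := h n
      refine ⟨∑ j, (c j : ℝ) • w j, ?_, lt_trans hc hn⟩
      exact Submodule.sum_mem _ fun j _ =>
        Submodule.smul_mem _ _ (Submodule.subset_span (Set.mem_range_self j))
    rwa [hclosed.closure_eq] at this

lemma measurableSet_memspan {d : ℕ} {ι κ : Type*} [Fintype ι] [Fintype κ] (g : ι → κ) :
    MeasurableSet {p : (Fin d → ℝ) × (κ → Fin d → ℝ) |
      p.1 ∈ Submodule.span ℝ (Set.range (fun k : ι => p.2 (g k)))} := by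
  have h : {p : (Fin d → ℝ) × (κ → Fin d → ℝ) |
        p.1 ∈ Submodule.span ℝ (Set.range (fun k : ι => p.2 (g k)))}
      = ⋂ n : ℕ, ⋃ c : ι → ℚ, {p : (Fin d → ℝ) × (κ → Fin d → ℝ) |
          dist p.1 (∑ j, (c j : ℝ) • p.2 (g j)) < 1/(n+1)} := by
    ext p
    simp only [Set.mem_iInter, Set.mem_iUnion, Set.mem_setOf_eq]
    exact mem_span_iff_rat _ _
  rw [h]
  refine MeasurableSet.iInter fun n => MeasurableSet.iUnion fun c => ?_
  refine (isOpen_lt ?_ continuous_const).measurableSet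
  exact Continuous.dist continuous_fst
    (continuous_finset_sum _ fun j _ =>
      by fun_prop)

lemma ac_of_map {α β : Type*} [MeasurableSpace α] [MeasurableSpace β] (e : α ≃ᵐ β)
    {μ ν : Measure α} (h : μ.map e ≪ ν.map e) : μ ≪ ν := by
  intro s hs
  obtain ⟨t, hst, htm, ht0⟩ := exists_measurable_superset_of_null hs
  have hpre : e ⁻¹' (e.symm ⁻¹' t) = t := by
    ext y; simp
  have h1 : ν.map e (e.symm ⁻¹' t) = 0 := by
    rw [e.map_apply, hpre]
    exact ht0
  have h2 := h h1
  rw [e.map_apply, hpre] at h2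
  exact measure_mono_null hst h2

lemma gaussPi_ac : ∀ d : ℕ,
    (Measure.pi fun _ : Fin d => gaussianReal 0 1) ≪ (volume : Measure (Fin d → ℝ)) := by
  intro d
  induction d with
  | zero =>
    intro s hs
    rcases Set.eq_empty_or_nonempty s with rfl | hne
    · simp
    · exfalso
      obtain ⟨x, hx⟩ := hne
      have huniv : s = Set.univ := by
        apply Set.eq_univ_of_forall
        intro y
        have : y = x := Subsingleton.elim y x
        rwa [this]
      rw [huniv] at hs
      have : (volume : Measure (Fin 0 → ℝ)) Set.univ = 1 := by
        rw [MeasureTheory.volume_pi, Measure.pi_univ]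
        simp
      rw [this] at hs
      norm_num at hs
  | succ d IH =>
    apply ac_of_map (MeasurableEquiv.piFinSuccAbove (fun _ : Fin (d+1) => ℝ) 0)
    rw [(measurePreserving_piFinSuccAbove (fun _ : Fin (d+1) => gaussianReal 0 1) 0).map_eq,
      (volume_preserving_piFinSuccAbove (fun _ : Fin (d+1) => ℝ) 0).map_eq,
      Measure.volume_eq_prod]
    exact Measure.AbsolutelyContinuous.prod
      (gaussianReal_absolutelyContinuous 0 one_ne_zero) IH

lemma gmeas_null_span {d M : ℕ} (i : Fin (M+1)) (I' : Finset (Fin M))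
    (hcard : I'.card < d) :
    gmeas d (M+1) {x | x i ∈ Submodule.span ℝ
      (Set.range (fun k : ↥I' => x (i.succAbove ↑k)))} = 0 := by
  set ν : Measure (Fin d → ℝ) := Measure.pi fun _ : Fin d => gaussianReal 0 1 with hν
  set e := MeasurableEquiv.piFinSuccAbove (fun _ : Fin (M+1) => (Fin d → ℝ)) i with he
  have hmp := measurePreserving_piFinSuccAbove
    (fun _ : Fin (M+1) => (Measure.pi fun _ : Fin d => gaussianReal 0 1)) i
  set T : Set ((Fin d → ℝ) × (Fin M → Fin d → ℝ)) :=
    {p | p.1 ∈ Submodule.span ℝ (Set.range (fun k : ↥I' => p.2 ↑k))} with hT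
  have hTm : MeasurableSet T := measurableSet_memspan (fun k : ↥I' => (↑k : Fin M))
  have hpre : e ⁻¹' T = {x | x i ∈ Submodule.span ℝ
      (Set.range (fun k : ↥I' => x (i.succAbove ↑k)))} := rfl
  have hkey := hmp.measure_preimage hTm.nullMeasurableSet
  rw [hpre] at hkey
  have hT0 : (ν.prod (Measure.pi fun _ : Fin M => ν)) T = 0 := by
    rw [Measure.prod_apply_symm hTm]
    have hslice : ∀ y : Fin M → Fin d → ℝ,
        ν ((fun a => (a, y)) ⁻¹' T) = 0 := by
      intro y
      have hs : ((fun a => (a, y)) ⁻¹' T) = (Submodule.span ℝ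
          (Set.range (fun k : ↥I' => y ↑k)) : Submodule ℝ (Fin d → ℝ)) := rfl
      rw [hs]
      apply gaussPi_ac d
      apply MeasureTheory.Measure.addHaar_submodule
      intro htop
      set J : Finset (Fin d → ℝ) := I'.image y with hJ
      have h1 : Submodule.span ℝ (Set.range (fun k : ↥I' => y ↑k))
          = Submodule.span ℝ (J : Set (Fin d → ℝ)) := by
        rw [hJ, Finset.coe_image, Set.image_eq_range]
        rfl
      have h2 : finrank ℝ (Submodule.span ℝ (J : Set (Fin d → ℝ))) ≤ J.card :=
        finrank_span_finset_le_card J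
      rw [← h1, htop] at h2
      rw [finrank_top] at h2
      have h3 : finrank ℝ (Fin d → ℝ) = d := finrank_fin_fun ℝ
      have h4 : J.card ≤ I'.card := Finset.card_image_le
      omega
    rw [lintegral_congr_ae (Filter.Eventually.of_forall (fun y => hslice y))]
    simp
  rw [show gmeas d (M+1) = Measure.pi
    (fun _ : Fin (M+1) => (Measure.pi fun _ : Fin d => gaussianReal 0 1)) from rfl, hkey]
  exact hT0

lemma ae_genpos {d M : ℕ} :
    ∀ᵐ x ∂ gmeas d (M+1), GenPos (ι := Fin (M+1)) d x := by
  rw [MeasureTheory.ae_iff]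
  have hnull : gmeas d (M+1) (⋃ (i : Fin (M+1)), ⋃ (I' : Finset (Fin M)),
      ⋃ (_ : I'.card < d),
        {x : Fin (M+1) → Fin d → ℝ | x i ∈ Submodule.span ℝ
          (Set.range (fun k : ↥I' => x (i.succAbove ↑k)))}) = 0 :=
    measure_iUnion_null fun i => measure_iUnion_null fun I' =>
      measure_iUnion_null fun hc => gmeas_null_span i I' hc
  refine measure_mono_null ?_ hnull
  intro x hx
  simp only [Set.mem_setOf_eq, GenPos] at hx
  push_neg at hx
  obtain ⟨s, c, hsc, hsum, j, hj, hcj⟩ := hx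
  have hxj : x j ∈ Submodule.span ℝ (x '' ((s.erase j) : Set (Fin (M+1)))) := by
    have hsplit : c j • x j + ∑ k ∈ s.erase j, c k • x k = 0 := by
      have harr := Finset.add_sum_erase s (fun k => c k • x k) hj
      rw [harr]
      exact hsum
    have : x j = (-(c j)⁻¹) • ∑ k ∈ s.erase j, c k • x k := by
      have hc : c j • x j = -∑ k ∈ s.erase j, c k • x k := by
        rw [eq_neg_iff_add_eq_zero]
        exact hsplit
      rw [neg_smul, ← smul_neg, ← hc, ← smul_assoc, smul_eq_mul,
        inv_mul_cancel₀ hcj, one_smul]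
    rw [this]
    refine Submodule.smul_mem _ _ (Submodule.sum_mem _ fun k hk => ?_)
    exact Submodule.smul_mem _ _ (Submodule.subset_span
      (Set.mem_image_of_mem x hk))
  set I' : Finset (Fin M) := (s.erase j).preimage j.succAbove
    (Function.Injective.injOn (Fin.succAbove_right_injective)) with hI'
  have hmono : x '' ((s.erase j) : Set (Fin (M+1)))
      ⊆ Set.range (fun k : ↥I' => x (j.succAbove ↑k)) := by
    rintro _ ⟨k, hk, rfl⟩
    have hkj : k ≠ j := Finset.ne_of_mem_erase hk
    obtain ⟨k', hk'⟩ := Fin.exists_succAbove_eq hkj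
    have hk'I : k' ∈ I' := by
      rw [hI', Finset.mem_preimage, hk']
      exact hk
    exact ⟨⟨k', hk'I⟩, by show x (j.succAbove k') = x k; rw [hk']⟩
  have hcardI' : I'.card < d := by
    have h1 : I'.card ≤ (s.erase j).card := by
      apply Finset.card_le_card_of_injOn j.succAbove
      · intro a ha
        rw [hI', Finset.mem_coe, Finset.mem_preimage] at ha
        exact ha
      · exact Function.Injective.injOn (Fin.succAbove_right_injective)
    have h2 : (s.erase j).card = s.card - 1 := Finset.card_erase_of_mem hj
    have h3 : 1 ≤ s.card := Finset.card_pos.2 ⟨j, hj⟩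
    omega
  refine Set.mem_iUnion.2 ⟨j, Set.mem_iUnion.2 ⟨I', Set.mem_iUnion.2 ⟨hcardI', ?_⟩⟩⟩
  exact Submodule.span_mono hmono hxj

lemma sgn_sq (b : Bool) : sgn b * sgn b = 1 := by cases b <;> simp [sgn]

lemma sgn_ne_zero (b : Bool) : sgn b ≠ 0 := by cases b <;> norm_num [sgn]

section Comb

variable {E : Type*} [AddCommGroup E] [Module ℝ E]

lemma GenPos.ne_zero {ι : Type*} {d : ℕ} {v : ι → E} (hv : GenPos d v) (hd : 1 ≤ d) (i : ι) :
    v i ≠ 0 := by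
  intro h
  have := hv {i} (fun _ => 1) (by simpa using hd) (by simp [h]) i (by simp)
  norm_num at this

/-- A functional with a strict sign condition can be perturbed to have any prescribed
behaviour on one more vector `z ≠ 0`, as long as it vanishes on `z`. -/
lemma perturb [FiniteDimensional ℝ E] {N : ℕ} (u : Fin N → E) (hN : 1 ≤ N) {z : E} (hz : z ≠ 0)
    {ε : Fin N → Bool} {f : Module.Dual ℝ E} (hf : ∀ i, 0 < sgn (ε i) * f (u i))
    (hfz : f z = 0) (b : Bool) :
    ∃ g : Module.Dual ℝ E, (0 < sgn b * g z) ∧ ∀ i, 0 < sgn (ε i) * g (u i) := by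
  obtain ⟨h, hh⟩ : ∃ h : Module.Dual ℝ E, h z ≠ 0 := by
    by_contra hc
    push_neg at hc
    exact hz ((Module.forall_dual_apply_eq_zero_iff ℝ z).1 hc)
  set h' : Module.Dual ℝ E := (h z)⁻¹ • h with hh'
  have hh'z : h' z = 1 := by simp [hh', inv_mul_cancel₀ hh]
  have hne : (Finset.univ : Finset (Fin N)).Nonempty := ⟨⟨0, hN⟩, mem_univ _⟩
  set m : ℝ := Finset.univ.inf' hne (fun i => sgn (ε i) * f (u i)) with hm
  have hmpos : 0 < m := by
    rw [hm, Finset.lt_inf'_iff]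
    exact fun i _ => hf i
  set M : ℝ := Finset.univ.sup' hne (fun i => |h' (u i)|) with hM
  have hM0 : 0 ≤ M := le_trans (abs_nonneg (h' (u ⟨0, hN⟩))) (Finset.le_sup' (fun i => |h' (u i)|) (mem_univ ⟨0, hN⟩))
  set δ : ℝ := m / (M + 1) with hδ
  have hδpos : 0 < δ := div_pos hmpos (by linarith)
  refine ⟨f + (sgn b * δ) • h', ?_, ?_⟩
  · simp only [LinearMap.add_apply, LinearMap.smul_apply, hfz, hh'z, zero_add, smul_eq_mul,
      mul_one]
    calc (0:ℝ) < δ := hδpos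
    _ = sgn b * (sgn b * δ) := by rw [← mul_assoc, sgn_sq, one_mul]
  · intro i
    simp only [LinearMap.add_apply, LinearMap.smul_apply, smul_eq_mul]
    have h1 : m ≤ sgn (ε i) * f (u i) := Finset.inf'_le _ (mem_univ i)
    have h2 : |h' (u i)| ≤ M := Finset.le_sup' (fun i => |h' (u i)|) (mem_univ i)
    have h3 : |sgn (ε i) * (sgn b * δ * h' (u i))| ≤ δ * M := by
      rw [abs_mul, abs_mul, abs_mul]
      have : |sgn (ε i)| = 1 := by cases (ε i) <;> norm_num [sgn]
      have hb : |sgn b| = 1 := by cases b <;> norm_num [sgn]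
      rw [this, hb, one_mul, one_mul, abs_of_pos hδpos]
      exact mul_le_mul_of_nonneg_left h2 hδpos.le
    have h4 : δ * M < m := by
      rw [hδ, div_mul_eq_mul_div, div_lt_iff₀ (by linarith)]
      nlinarith
    have := neg_abs_le (sgn (ε i) * (sgn b * δ * h' (u i)))
    calc (0:ℝ) < m - δ * M := by linarith
    _ ≤ sgn (ε i) * f (u i) + sgn (ε i) * (sgn b * δ * h' (u i)) := by nlinarith
    _ = sgn (ε i) * (f (u i) + sgn b * δ * h' (u i)) := by ring

lemma pascal_sum (n d : ℕ) (hd : 1 ≤ d) :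
    ∑ k ∈ range d, (n+1).choose k
      = ∑ k ∈ range d, n.choose k + ∑ k ∈ range (d-1), n.choose k := by
  obtain ⟨e, rfl⟩ : ∃ e, d = e + 1 := ⟨d - 1, by omega⟩
  simp only [Nat.add_sub_cancel]
  rw [Finset.sum_range_succ' (fun k => (n+1).choose k) e]
  simp only [Nat.choose_succ_succ, Nat.choose_zero_right]
  rw [Finset.sum_add_distrib]
  have h2 : ∑ k ∈ range (e+1), n.choose k = ∑ k ∈ range e, n.choose (k+1) + 1 := by
    rw [Finset.sum_range_succ' (fun k => n.choose k) e, Nat.choose_zero_right]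
  simp only [Nat.succ_eq_add_one] at *
  omega

lemma rea_cons_restrict {N : ℕ} (v : Fin (N+1) → E) {b : Bool} {ε : Fin N → Bool}
    (h : Rea v (Fin.cons b ε)) : Rea (fun i => v i.succ) ε := by
  obtain ⟨f, hf⟩ := h
  exact ⟨f, fun i => by simpa [Fin.cons_succ] using hf i.succ⟩

lemma rea_cons_iff {N : ℕ} (v : Fin (N+1) → E) (b : Bool) (ε : Fin N → Bool) :
    Rea v (Fin.cons b ε) ↔
      ∃ f : Module.Dual ℝ E, (0 < sgn b * f (v 0)) ∧ ∀ i : Fin N, 0 < sgn (ε i) * f (v i.succ) := by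
  constructor
  · rintro ⟨f, hf⟩
    exact ⟨f, by simpa [Fin.cons_zero] using hf 0,
      fun i => by simpa [Fin.cons_succ] using hf i.succ⟩
  · rintro ⟨f, h0, hs⟩
    refine ⟨f, fun i => ?_⟩
    refine Fin.cases ?_ ?_ i
    · simpa [Fin.cons_zero] using h0
    · intro j; simpa [Fin.cons_succ] using hs j

theorem card_rea : ∀ (N : ℕ), 1 ≤ N → ∀ (E : Type) (_ : AddCommGroup E) (_ : Module ℝ E)
    (_ : FiniteDimensional ℝ E) (v : Fin N → E), GenPos (finrank ℝ E) v →
    (Finset.univ.filter (fun ε : Fin N → Bool => Rea v ε)).card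
      = 2 * ∑ k ∈ range (finrank ℝ E), (N-1).choose k := by
  intro N hN
  induction N, hN using Nat.le_induction with
  | base =>
    intro E _ _ _ v hv
    rcases Nat.eq_zero_or_pos (finrank ℝ E) with hd | hd
    · have hsub : Subsingleton E := finrank_zero_iff.mp hd
      have : ∀ ε : Fin 1 → Bool, ¬ Rea v ε := by
        rintro ε ⟨f, hf⟩
        have h0 := hf 0
        rw [Subsingleton.elim (v 0) 0, map_zero, mul_zero] at h0
        exact lt_irrefl _ h0
      rw [Finset.filter_false_of_mem (fun ε _ => this ε), hd]
      simp
    · have hv0 : v 0 ≠ 0 := hv.ne_zero hd 0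
      obtain ⟨f, hf⟩ : ∃ f : Module.Dual ℝ E, f (v 0) ≠ 0 := by
        by_contra hc
        push_neg at hc
        exact hv0 ((Module.forall_dual_apply_eq_zero_iff ℝ (v 0)).1 hc)
      have hall : ∀ ε : Fin 1 → Bool, Rea v ε := by
        intro ε
        refine ⟨(sgn (ε 0) * (f (v 0))⁻¹) • f, fun i => ?_⟩
        rw [Subsingleton.elim i 0]
        simp only [LinearMap.smul_apply, smul_eq_mul]
        have : sgn (ε 0) * (sgn (ε 0) * (f (v 0))⁻¹ * f (v 0)) = 1 := by
          rw [mul_assoc, inv_mul_cancel₀ hf, mul_one, sgn_sq]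
        rw [this]; norm_num
      rw [Finset.filter_true_of_mem (fun ε _ => hall ε)]
      have hsum : ∑ k ∈ range (finrank ℝ E), (0:ℕ).choose k = 1 := by
        rw [Finset.sum_eq_single_of_mem 0 (mem_range.2 hd)]
        · simp
        · intro k _ hk
          obtain ⟨k', rfl⟩ : ∃ k', k = k' + 1 := ⟨k - 1, by omega⟩
          simp
      simp [hsum, Finset.card_univ]
  | succ N hN IH =>
    intro E _ _ _ v hv
    obtain ⟨M, rfl⟩ : ∃ M, N = M + 1 := ⟨N - 1, by omega⟩
    set d := finrank ℝ E with hdd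
    rcases Nat.eq_zero_or_pos d with hd | hd
    · have hsub : Subsingleton E := finrank_zero_iff.mp hd
      have : ∀ ε : Fin (M+2) → Bool, ¬ Rea v ε := by
        rintro ε ⟨f, hf⟩
        have h0 := hf 0
        rw [Subsingleton.elim (v 0) 0, map_zero, mul_zero] at h0
        exact lt_irrefl _ h0
      rw [Finset.filter_false_of_mem (fun ε _ => this ε), hd]
      simp
    -- main case
    set z := v 0 with hzdef
    set u : Fin (M+1) → E := fun i => v i.succ with hudef
    have hz : z ≠ 0 := hv.ne_zero hd 0
    set W : Submodule ℝ E := ℝ ∙ z with hWdef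
    have hzW : z ∈ W := Submodule.mem_span_singleton_self z
    have hGPu : GenPos d u := by
      intro s c hs hsum j hj
      have := hv (s.image Fin.succ) (fun j => Fin.cases 0 c j)
        (le_trans Finset.card_image_le hs) ?_ j.succ (Finset.mem_image_of_mem _ hj)
      · simpa using this
      · rw [Finset.sum_image (fun a _ b _ h => Fin.succ_injective _ h)]
        simpa using hsum
    -- quotient setup
    have hdimW : finrank ℝ W = 1 := finrank_span_singleton hz
    have hdimQ : finrank ℝ (E ⧸ W) = d - 1 := by
      have := Submodule.finrank_quotient_add_finrank W
      omega
    have hGPQ : GenPos (finrank ℝ (E ⧸ W)) (fun i => W.mkQ (u i)) := by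
      rw [hdimQ]
      intro s c hs hsum j hj
      have hmem : (∑ j ∈ s, c j • u j) ∈ W := by
        rw [← Submodule.Quotient.mk_eq_zero]
        have h1 : W.mkQ (∑ j ∈ s, c j • u j) = ∑ j ∈ s, c j • W.mkQ (u j) := by
          rw [map_sum]; simp
        rw [← Submodule.mkQ_apply, h1, hsum]
      obtain ⟨a, ha⟩ := Submodule.mem_span_singleton.mp hmem
      have key := hv (insert 0 (s.image Fin.succ)) (fun j => Fin.cases (-a) c j) ?_ ?_
        j.succ (Finset.mem_insert_of_mem (Finset.mem_image_of_mem _ hj))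
      · simpa using key
      · calc (insert 0 (s.image Fin.succ)).card ≤ (s.image Fin.succ).card + 1 :=
            Finset.card_insert_le _ _
          _ ≤ s.card + 1 := by
            have := Finset.card_image_le (s := s) (f := Fin.succ)
            omega
          _ ≤ d := by omega
      · rw [Finset.sum_insert (by simp [Fin.succ_ne_zero]),
          Finset.sum_image (fun a _ b _ h => Fin.succ_injective _ h)]
        simp only [Fin.cases_zero, Fin.cases_succ]
        have ha' : ∑ j ∈ s, c j • v j.succ = a • v 0 := ha.symm
        rw [ha']
        simp
    -- characterization of double extensions via the quotient
    have hboth : ∀ ε : Fin (M+1) → Bool,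
        (Rea v (Fin.cons true ε) ∧ Rea v (Fin.cons false ε)) ↔
          Rea (fun i => W.mkQ (u i)) ε := by
      intro ε
      constructor
      · rintro ⟨⟨fp, hfp⟩, ⟨fm, hfm⟩⟩
        have hp0 : 0 < fp (v 0) := by simpa [sgn, Fin.cons_zero] using hfp 0
        have hm0 : fm (v 0) < 0 := by
          have h0 := hfm 0
          simp only [Fin.cons_zero, sgn, if_neg Bool.false_ne_true] at h0
          linarith
        set g : Module.Dual ℝ E := (-(fm (v 0))) • fp + (fp (v 0)) • fm with hgdef
        have hgz : g z = 0 := by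
          simp only [hgdef, LinearMap.add_apply, LinearMap.smul_apply, smul_eq_mul, hzdef]
          ring
        have hgs : ∀ i, 0 < sgn (ε i) * g (u i) := by
          intro i
          have h1 : 0 < sgn (ε i) * fp (v i.succ) := by simpa [Fin.cons_succ] using hfp i.succ
          have h2 : 0 < sgn (ε i) * fm (v i.succ) := by simpa [Fin.cons_succ] using hfm i.succ
          simp only [hgdef, LinearMap.add_apply, LinearMap.smul_apply, smul_eq_mul, hudef]
          nlinarith
        have hker : W ≤ LinearMap.ker g := by
          rw [hWdef, Submodule.span_singleton_le_iff_mem]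
          exact LinearMap.mem_ker.2 hgz
        refine ⟨W.liftQ g hker, fun i => ?_⟩
        simpa using hgs i
      · rintro ⟨g, hg⟩
        set f : Module.Dual ℝ E := g.comp W.mkQ with hfdef
        have hfz : f z = 0 := by
          have : W.mkQ z = 0 := by
            rw [Submodule.mkQ_apply, Submodule.Quotient.mk_eq_zero]
            exact hzW
          simp [hfdef, this]
        have hfs : ∀ i, 0 < sgn (ε i) * f (u i) := fun i => hg i
        constructor
        · obtain ⟨g', hg'z, hg's⟩ := perturb u (by omega) hz hfs hfz true
          rw [rea_cons_iff]
          exact ⟨g', hg'z, hg's⟩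
        · obtain ⟨g', hg'z, hg's⟩ := perturb u (by omega) hz hfs hfz false
          rw [rea_cons_iff]
          exact ⟨g', hg'z, hg's⟩
    -- at least one extension is realizable
    have hunion : ∀ ε : Fin (M+1) → Bool,
        (Rea v (Fin.cons true ε) ∨ Rea v (Fin.cons false ε)) ↔ Rea u ε := by
      intro ε
      constructor
      · rintro (h | h) <;> exact rea_cons_restrict v h
      · rintro ⟨f, hf⟩
        by_cases hfz : f z = 0
        · left
          obtain ⟨g', hg'z, hg's⟩ := perturb u (by omega) hz hf hfz true
          rw [rea_cons_iff]
          exact ⟨g', hg'z, hg's⟩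
        · rcases lt_or_gt_of_ne hfz with hneg | hpos
          · right
            rw [rea_cons_iff]
            refine ⟨f, ?_, hf⟩
            simp only [sgn, if_neg Bool.false_ne_true]
            have : f (v 0) < 0 := hneg
            linarith
          · left
            rw [rea_cons_iff]
            refine ⟨f, ?_, hf⟩
            simpa [sgn] using hpos
    -- cardinality splitting
    have eqv : {ε' : Fin (M+2) → Bool // Rea v ε'}
        ≃ Σ b : Bool, {ε : Fin (M+1) → Bool // Rea v (Fin.cons b ε)} :=
      (Equiv.subtypeEquiv (Fin.consEquiv (fun _ => Bool)) (fun p => Iff.rfl)).symm.trans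
        (Equiv.subtypeProdEquivSigmaSubtype (fun b (ε : Fin (M+1) → Bool) => Rea v (Fin.cons b ε)))
    have hsplit : (univ.filter (fun ε' : Fin (M+2) → Bool => Rea v ε')).card
        = (univ.filter (fun ε : Fin (M+1) → Bool => Rea v (Fin.cons true ε))).card
          + (univ.filter (fun ε : Fin (M+1) → Bool => Rea v (Fin.cons false ε))).card := by
      rw [← Fintype.card_subtype, ← Fintype.card_subtype, ← Fintype.card_subtype,
        Fintype.card_congr eqv, Fintype.card_sigma, Fintype.sum_bool]
    have hcards := Finset.card_union_add_card_inter
      (univ.filter (fun ε : Fin (M+1) → Bool => Rea v (Fin.cons true ε)))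
      (univ.filter (fun ε : Fin (M+1) → Bool => Rea v (Fin.cons false ε)))
    rw [← Finset.filter_or, ← Finset.filter_and,
      Finset.filter_congr (fun ε _ => hunion ε), Finset.filter_congr (fun ε _ => hboth ε)]
      at hcards
    have IH1 := IH E ‹_› ‹_› ‹_› u hGPu
    have IH2 := IH (E ⧸ W) inferInstance inferInstance inferInstance (fun i => W.mkQ (u i)) hGPQ
    rw [hdimQ] at IH2
    simp only [Nat.add_sub_cancel] at IH1 IH2 ⊢
    have hpas := pascal_sum M d hd
    rw [← hdd] at IH1
    rw [hsplit, ← hcards, IH1, IH2, hpas]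
    ring

/-- A finite family of points in `ℝ^d` is linearly separable from the origin iff some
vector `S` has strictly positive inner product with all of them. -/
def SeparableFromOrigin {d N : ℕ} (x : Fin N → Fin d → ℝ) : Prop :=
  ∃ S : Fin d → ℝ, ∀ i, 0 < ∑ j, S j * x i j

/-- The probability that `N` i.i.d. standard Gaussian samples in `ℝ^d` are linearly
separable from the origin. -/
noncomputable def sepProb (d N : ℕ) : ℝ :=
  ((Measure.pi fun _ : Fin N => (Measure.pi fun _ : Fin d => gaussianReal 0 1))
    {x : Fin N → Fin d → ℝ | SeparableFromOrigin x}).toReal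

-- ## The exact formula

lemma gmeas_formula (d M : ℕ) :
    (2:ℝ≥0∞)^(M+1) * gmeas d (M+1) {x | Rea' x (fun _ => true)}
      = ((2 * ∑ k ∈ range d, Nat.choose M k : ℕ) : ℝ≥0∞) := by
  set μ := gmeas d (M+1) with hμ
  have hfin : finrank ℝ (Fin d → ℝ) = d := finrank_fin_fun ℝ
  have key : ∀ᵐ x ∂μ, (((univ.filter (fun ε : Fin (M+1) → Bool => Rea' x ε)).card : ℝ≥0∞))
      = ((2 * ∑ k ∈ range d, Nat.choose M k : ℕ) : ℝ≥0∞) := by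
    filter_upwards [ae_genpos (d := d) (M := M)] with x hx
    have h := card_rea (M+1) (by omega) (Fin d → ℝ) inferInstance inferInstance inferInstance
      x (by rw [hfin]; exact hx)
    rw [hfin] at h
    have heq : (univ.filter (fun ε : Fin (M+1) → Bool => Rea' x ε))
        = (univ.filter (fun ε : Fin (M+1) → Bool => Rea x ε)) :=
      Finset.filter_congr (fun ε _ => rea'_iff_rea x ε)
    rw [heq, h]
    norm_num
  have hpoint : ∀ x : Fin (M+1) → Fin d → ℝ,
      ∑ ε : Fin (M+1) → Bool, Set.indicator {y | Rea' y ε} (fun _ => (1:ℝ≥0∞)) x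
        = (((univ.filter (fun ε : Fin (M+1) → Bool => Rea' x ε)).card : ℝ≥0∞)) := by
    intro x
    rw [← Finset.sum_boole]
    refine Finset.sum_congr rfl fun ε _ => ?_
    rw [Set.indicator_apply]
    simp only [Set.mem_setOf_eq]
  have hint : ∫⁻ x, (((univ.filter (fun ε : Fin (M+1) → Bool => Rea' x ε)).card : ℝ≥0∞)) ∂μ
      = ∑ ε : Fin (M+1) → Bool, μ {x | Rea' x ε} := by
    calc ∫⁻ x, (((univ.filter (fun ε : Fin (M+1) → Bool => Rea' x ε)).card : ℝ≥0∞)) ∂μ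
        = ∫⁻ x, ∑ ε : Fin (M+1) → Bool,
            Set.indicator {y | Rea' y ε} (fun _ => (1:ℝ≥0∞)) x ∂μ :=
          lintegral_congr (fun x => (hpoint x).symm)
      _ = ∑ ε : Fin (M+1) → Bool,
            ∫⁻ x, Set.indicator {y | Rea' y ε} (fun _ => (1:ℝ≥0∞)) x ∂μ :=
          lintegral_finset_sum _ (fun ε _ =>
            measurable_const.indicator (isOpen_rea' ε).measurableSet)
      _ = ∑ ε : Fin (M+1) → Bool, μ {x | Rea' x ε} := by
          refine Finset.sum_congr rfl fun ε _ => ?_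
          rw [lintegral_indicator_const (isOpen_rea' ε).measurableSet, one_mul]
  have hconst : ∫⁻ x, (((univ.filter (fun ε : Fin (M+1) → Bool => Rea' x ε)).card : ℝ≥0∞)) ∂μ
      = ((2 * ∑ k ∈ range d, Nat.choose M k : ℕ) : ℝ≥0∞) := by
    rw [lintegral_congr_ae key, lintegral_const, measure_univ, mul_one]
  have hflipsum : ∑ ε : Fin (M+1) → Bool, μ {x | Rea' x ε}
      = (2:ℝ≥0∞)^(M+1) * μ {x | Rea' x (fun _ => true)} := by
    rw [Finset.sum_congr rfl (fun ε _ => gmeas_rea' ε), Finset.sum_const, Finset.card_univ]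
    rw [nsmul_eq_mul]
    congr 1
    rw [Fintype.card_fun]
    simp
  rw [← hflipsum, ← hint, hconst]

lemma sepProb_eq (d N : ℕ) (hN : 1 ≤ N) :
    sepProb d N = (∑ k ∈ range d, ((N-1).choose k : ℝ)) / 2^(N-1) := by
  obtain ⟨M, rfl⟩ : ∃ M, N = M + 1 := ⟨N - 1, by omega⟩
  have hset : {x : Fin (M+1) → Fin d → ℝ | SeparableFromOrigin x}
      = {x | Rea' x (fun _ => true)} := by
    ext x
    simp [SeparableFromOrigin, Rea', sgn]
  have h := gmeas_formula d M
  have h2 : sepProb d (M+1) = (gmeas d (M+1) {x | Rea' x (fun _ => true)}).toReal := by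
    rw [sepProb, ← hset]
    rfl
  have hne : ((2:ℝ≥0∞)^(M+1)) ≠ 0 := by
    exact pow_ne_zero _ (by norm_num)
  have hnetop : ((2:ℝ≥0∞)^(M+1)) ≠ ⊤ := by
    exact ENNReal.pow_ne_top (by norm_num)
  have hμval : gmeas d (M+1) {x | Rea' x (fun _ => true)}
      = ((2 * ∑ k ∈ range d, Nat.choose M k : ℕ) : ℝ≥0∞) / 2^(M+1) :=
    (ENNReal.eq_div_iff hne hnetop).2 h
  rw [h2, hμval, ENNReal.toReal_div]
  have hnum : (((2 * ∑ k ∈ range d, Nat.choose M k : ℕ) : ℝ≥0∞)).toReal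
      = 2 * ∑ k ∈ range d, ((M.choose k : ℝ)) := by
    rw [ENNReal.toReal_natCast]
    push_cast
    ring
  have hden : (((2:ℝ≥0∞))^(M+1)).toReal = (2:ℝ)^(M+1) := by
    rw [ENNReal.toReal_pow]
    norm_num
  rw [hnum, hden]
  simp only [Nat.add_sub_cancel]
  rw [pow_succ]
  field_simp

-- ## Binomial estimates

lemma sum_choose_split (n d : ℕ) :
    ∑ k ∈ range d, n.choose k + ∑ k ∈ Finset.Icc d n, n.choose k = 2^n := by
  rcases le_or_gt d (n+1) with h | h
  · have hIcc : Finset.Icc d n = Finset.Ico d (n+1) := by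
      rw [Finset.Ico_add_one_right_eq_Icc]
    rw [hIcc, Finset.range_eq_Ico, Finset.sum_Ico_consecutive _ (Nat.zero_le d) h]
    have : Finset.Ico 0 (n+1) = Finset.range (n+1) := by rw [Finset.range_eq_Ico]
    rw [this]
    exact Nat.sum_range_choose n
  · have h1 : Finset.Icc d n = ∅ := Finset.Icc_eq_empty (by omega)
    rw [h1, Finset.sum_empty, add_zero, ← Nat.sum_range_choose n]
    symm
    apply Finset.sum_subset (Finset.range_subset_range.2 (by omega))
    intro k hk hk2
    simp only [Finset.mem_range] at hk hk2
    exact Nat.choose_eq_zero_of_lt (by omega)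

lemma sum_choose_mul_pow_le (n : ℕ) (t : ℝ) (ht : 0 ≤ t) (s : Finset ℕ) :
    ∑ k ∈ s, (n.choose k : ℝ) * t^k ≤ (1+t)^n := by
  have hfull : ∑ k ∈ range (n+1), (n.choose k : ℝ) * t^k = (1+t)^n := by
    rw [add_comm (1:ℝ) t, add_pow]
    apply Finset.sum_congr rfl
    intro k hk
    simp [mul_comm]
  calc ∑ k ∈ s, (n.choose k : ℝ) * t^k
      = ∑ k ∈ s ∩ range (n+1), (n.choose k : ℝ) * t^k := by
        symm
        apply Finset.sum_subset Finset.inter_subset_left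
        intro k hk hk2
        have hkn : ¬ k < n+1 := fun hlt =>
          hk2 (Finset.mem_inter.2 ⟨hk, Finset.mem_range.2 hlt⟩)
        rw [Nat.choose_eq_zero_of_lt (by omega)]
        simp
    _ ≤ ∑ k ∈ range (n+1), (n.choose k : ℝ) * t^k := by
        apply Finset.sum_le_sum_of_subset_of_nonneg Finset.inter_subset_right
        intro k _ _
        positivity
    _ = (1+t)^n := hfull

lemma tail_le (n m : ℕ) (t : ℝ) (ht : 1 ≤ t) :
    (∑ k ∈ Finset.Icc m n, (n.choose k : ℝ)) ≤ (1+t)^n / t^m := by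
  have ht0 : 0 < t := by linarith
  rw [le_div_iff₀ (by positivity)]
  calc (∑ k ∈ Finset.Icc m n, (n.choose k : ℝ)) * t^m
      = ∑ k ∈ Finset.Icc m n, (n.choose k : ℝ) * t^m := by rw [Finset.sum_mul]
    _ ≤ ∑ k ∈ Finset.Icc m n, (n.choose k : ℝ) * t^k := by
        apply Finset.sum_le_sum
        intro k hk
        exact mul_le_mul_of_nonneg_left
          (pow_le_pow_right₀ ht (Finset.mem_Icc.1 hk).1) (by positivity)
    _ ≤ (1+t)^n := sum_choose_mul_pow_le n t (by linarith) _

lemma head_le (n d : ℕ) (t : ℝ) (ht0 : 0 < t) (ht : t ≤ 1) (hd : 1 ≤ d) :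
    (∑ k ∈ range d, (n.choose k : ℝ)) ≤ (1+t)^n / t^(d-1) := by
  rw [le_div_iff₀ (by positivity)]
  calc (∑ k ∈ range d, (n.choose k : ℝ)) * t^(d-1)
      = ∑ k ∈ range d, (n.choose k : ℝ) * t^(d-1) := by rw [Finset.sum_mul]
    _ ≤ ∑ k ∈ range d, (n.choose k : ℝ) * t^k := by
        apply Finset.sum_le_sum
        intro k hk
        have hk' : k ≤ d-1 := by
          have := Finset.mem_range.1 hk
          omega
        exact mul_le_mul_of_nonneg_left
          (pow_le_pow_of_le_one ht0.le ht hk') (by positivity)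
    _ ≤ (1+t)^n := sum_choose_mul_pow_le n t ht0.le _

-- ## Choice of `t`

lemma log_ineq (β t : ℝ) (hβ0 : 0 ≤ β) (ht0 : 0 < t)
    (hmid : (t-1)/2 < β * ((t-1)/t)) (h1t : 0 < (1+t)/2) :
    (1+t)/2 < t ^ β := by
  have hlog1 : Real.log ((1+t)/2) ≤ (t-1)/2 := by
    have := Real.log_le_sub_one_of_pos h1t
    linarith
  have hlog2 : (t-1)/t ≤ Real.log t := by
    have h := Real.one_sub_inv_le_log_of_pos ht0
    have h2 : 1 - t⁻¹ = (t-1)/t := by field_simp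
    linarith [h2 ▸ h]
  have hkey : Real.log ((1+t)/2) < β * Real.log t := by
    have := mul_le_mul_of_nonneg_left hlog2 hβ0
    linarith
  have hexp := Real.exp_lt_exp.2 hkey
  rw [Real.exp_log h1t] at hexp
  rwa [Real.rpow_def_of_pos ht0, mul_comm]

lemma exists_t_gt (β : ℝ) (hβ : 1/2 < β) (hβ1 : β ≤ 1) :
    ∃ t : ℝ, 1 < t ∧ (1+t)/2 < t ^ β := by
  set t : ℝ := (1+2*β)/2 with htdef
  have ht1 : 1 < t := by rw [htdef]; linarith
  have ht0 : 0 < t := by linarith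
  have h2b : t < 2*β := by rw [htdef]; linarith
  refine ⟨t, ht1, log_ineq β t (by linarith) ht0 ?_ (by linarith)⟩
  have ht1' : 0 < t - 1 := by linarith
  rw [div_lt_iff₀ (by norm_num : (0:ℝ) < 2),
    show β * ((t-1)/t) * 2 = (β * (t-1) * 2) / t from by ring, lt_div_iff₀ ht0]
  nlinarith

lemma exists_t_lt (β : ℝ) (hβ0 : 0 < β) (hβ : β < 1/2) :
    ∃ t : ℝ, 0 < t ∧ t < 1 ∧ (1+t)/2 < t ^ β := by
  set t : ℝ := β + 1/2 with htdef
  have ht0 : 0 < t := by rw [htdef]; linarith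
  have ht1 : t < 1 := by rw [htdef]; linarith
  have h2b : 2*β < t := by rw [htdef]; linarith
  refine ⟨t, ht0, ht1, log_ineq β t (by linarith) ht0 ?_ (by linarith)⟩
  have ht1' : t - 1 < 0 := by linarith
  rw [div_lt_iff₀ (by norm_num : (0:ℝ) < 2),
    show β * ((t-1)/t) * 2 = (β * (t-1) * 2) / t from by ring, lt_div_iff₀ ht0]
  nlinarith

/-- With `N_d = ⌈d/λ⌉` samples in dimension `d`, the separability
probability tends to `1` as `d → ∞` when `λ > 1/2`, and to `0` when `λ < 1/2`. -/
theorem separability_phase_transition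
    (l : ℝ) (hl : 0 < l) (hl' : l ≠ 1 / 2) :
    (1 / 2 < l →
      Tendsto (fun d : ℕ => sepProb d ⌈(d : ℝ) / l⌉₊) atTop (nhds 1)) ∧
    (l < 1 / 2 →
      Tendsto (fun d : ℕ => sepProb d ⌈(d : ℝ) / l⌉₊) atTop (nhds 0)) := by
  have hN1 : ∀ d : ℕ, 1 ≤ d → 1 ≤ ⌈(d : ℝ) / l⌉₊ := by
    intro d hd
    rw [Nat.one_le_iff_ne_zero, ← Nat.pos_iff_ne_zero, Nat.ceil_pos]
    apply div_pos _ hl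
    exact_mod_cast hd
  have hn_tendsto : Tendsto (fun d : ℕ => ⌈(d : ℝ) / l⌉₊ - 1) atTop atTop := by
    rw [tendsto_atTop]
    intro b
    filter_upwards [eventually_ge_atTop (⌈l * (b+1)⌉₊ + 1)] with d hd
    have h0 : (⌈l * (b+1)⌉₊ : ℝ) ≤ d := by exact_mod_cast (by omega : ⌈l*(b+1)⌉₊ ≤ d)
    have h1 : l * (b+1) ≤ (d:ℝ) := le_trans (Nat.le_ceil _) h0
    have h2 : ((b:ℝ)+1) ≤ (d:ℝ)/l := by
      rw [le_div_iff₀ hl]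
      linarith [h1, mul_comm l ((b:ℝ)+1)]
    have h3 : b+1 ≤ ⌈(d:ℝ)/l⌉₊ := by
      have hc := Nat.ceil_mono h2
      rwa [show ((b:ℝ)+1) = ((b+1 : ℕ) : ℝ) from by push_cast; ring,
        Nat.ceil_natCast] at hc
    omega
  constructor
  · -- supercritical: λ > 1/2
    intro hlgt
    set β : ℝ := min l 1 with hβdef
    have hβ : 1/2 < β := lt_min hlgt (by norm_num)
    have hβ1 : β ≤ 1 := min_le_right _ _
    have hβl : β ≤ l := min_le_left _ _
    have hβ0 : 0 ≤ β := by linarith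
    obtain ⟨t, ht1, htq⟩ := exists_t_gt β hβ hβ1
    have ht0 : (0:ℝ) < t := by linarith
    set q : ℝ := ((1+t)/2) / t ^ β with hqdef
    have htβ0 : (0:ℝ) < t ^ β := Real.rpow_pos_of_pos ht0 β
    have hq0 : 0 ≤ q := by positivity
    have hq1 : q < 1 := (div_lt_one htβ0).2 htq
    have hbound : ∀ᶠ d : ℕ in atTop,
        0 ≤ 1 - sepProb d ⌈(d : ℝ) / l⌉₊ ∧
        1 - sepProb d ⌈(d : ℝ) / l⌉₊ ≤ q ^ (⌈(d : ℝ) / l⌉₊ - 1) := by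
      filter_upwards [eventually_ge_atTop 1] with d hd
      set Nd : ℕ := ⌈(d : ℝ) / l⌉₊ with hNd
      set nd : ℕ := Nd - 1 with hnd
      have hN1' : 1 ≤ Nd := hN1 d hd
      have hformula := sepProb_eq d Nd hN1'
      have hsplit : ((∑ k ∈ range d, (nd.choose k : ℝ))) + (∑ k ∈ Finset.Icc d nd, (nd.choose k : ℝ))
          = 2 ^ nd := by
        have := sum_choose_split nd d
        exact_mod_cast congrArg (Nat.cast : ℕ → ℝ) this
      have h2n : (0:ℝ) < 2 ^ nd := by positivity
      have hone : 1 - sepProb d Nd = (∑ k ∈ Finset.Icc d nd, (nd.choose k : ℝ)) / 2 ^ nd := by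
        rw [hformula]
        rw [show Nd - 1 = nd from rfl]
        field_simp
        linarith [hsplit]
      constructor
      · rw [hone]
        positivity
      · rw [hone]
        -- cast facts
        have hcast : ((nd:ℕ):ℝ) = (Nd : ℝ) - 1 := by
          rw [hnd]
          push_cast [Nat.cast_sub hN1']
          ring
        have hNlt : (Nd : ℝ) < (d:ℝ)/l + 1 := Nat.ceil_lt_add_one (by positivity)
        have hlnd : l * nd ≤ (d:ℝ) := by
          have h4 : (nd:ℝ) < (d:ℝ)/l := by rw [hcast]; linarith
          have h5 := (lt_div_iff₀ hl).1 h4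
          nlinarith
        have hβn : β * nd ≤ (d:ℝ) := by
          have : β * nd ≤ l * nd := by
            apply mul_le_mul_of_nonneg_right hβl (by positivity)
          linarith
        calc (∑ k ∈ Finset.Icc d nd, (nd.choose k : ℝ)) / 2 ^ nd
            ≤ ((1+t)^nd / t^d) / 2^nd :=
              div_le_div_of_nonneg_right (tail_le nd d t ht1.le) (by positivity)
          _ = ((1+t)/2)^nd / t^d := by
              rw [div_pow]
              ring
          _ ≤ ((1+t)/2)^nd / t ^ (β * (nd:ℝ)) := by
              have hexp : t ^ (β * (nd:ℝ)) ≤ t ^ (d:ℕ) := by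
                have h9 : t ^ (β * (nd:ℝ)) ≤ t ^ ((d:ℕ):ℝ) :=
                  Real.rpow_le_rpow_of_exponent_le ht1.le hβn
                rwa [Real.rpow_natCast t d] at h9
              exact div_le_div_of_nonneg_left (by positivity)
                (Real.rpow_pos_of_pos ht0 _) hexp
          _ = q ^ nd := by
              have hq' : q ^ nd = ((1+t)/2)^nd / t ^ (β * (nd:ℝ)) := by
                rw [hqdef, div_pow, ← Real.rpow_natCast (t ^ β) nd,
                  ← Real.rpow_mul ht0.le]
              rw [hq']
    have htail : Tendsto (fun d : ℕ => 1 - sepProb d ⌈(d : ℝ) / l⌉₊) atTop (nhds 0) := by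
      apply squeeze_zero' (hbound.mono fun d h => h.1) (hbound.mono fun d h => h.2)
      exact (tendsto_pow_atTop_nhds_zero_of_lt_one hq0 hq1).comp hn_tendsto
    have := htail.const_sub (1:ℝ)
    simp only [sub_zero] at this
    refine this.congr fun d => ?_
    ring
  · -- subcritical: λ < 1/2
    intro hllt
    obtain ⟨t, ht0, ht1, htq⟩ := exists_t_lt l hl hllt
    set q : ℝ := ((1+t)/2) / t ^ l with hqdef
    have htβ0 : (0:ℝ) < t ^ l := Real.rpow_pos_of_pos ht0 l
    have hq0 : 0 ≤ q := by positivity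
    have hq1 : q < 1 := (div_lt_one htβ0).2 htq
    have hbound : ∀ᶠ d : ℕ in atTop,
        sepProb d ⌈(d : ℝ) / l⌉₊ ≤ q ^ (⌈(d : ℝ) / l⌉₊ - 1) := by
      filter_upwards [eventually_ge_atTop 1] with d hd
      set Nd : ℕ := ⌈(d : ℝ) / l⌉₊ with hNd
      set nd : ℕ := Nd - 1 with hnd
      have hN1' : 1 ≤ Nd := hN1 d hd
      have hformula := sepProb_eq d Nd hN1'
      have hcast : ((nd:ℕ):ℝ) = (Nd : ℝ) - 1 := by
        rw [hnd]
        push_cast [Nat.cast_sub hN1']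
        ring
      have hcastd : (((d-1:ℕ)):ℝ) = (d:ℝ) - 1 := by
        push_cast [Nat.cast_sub hd]
        ring
      have hdln : ((d:ℝ) - 1) ≤ l * nd := by
        have h5 : (d:ℝ)/l ≤ (Nd:ℝ) := Nat.le_ceil _
        have h6 : (d:ℝ) ≤ l * Nd := by
          rw [div_le_iff₀ hl] at h5
          linarith [mul_comm (Nd:ℝ) l]
        have h7 : l * (Nd:ℝ) = l * nd + l := by rw [hcast]; ring
        have hll1 : l < 1 := by linarith
        nlinarith
      have hfr : sepProb d Nd = (∑ k ∈ range d, (nd.choose k : ℝ)) / 2 ^ nd := by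
        rw [hformula, show Nd - 1 = nd from rfl]
      rw [hfr]
      calc (∑ k ∈ range d, (nd.choose k : ℝ)) / 2 ^ nd
          ≤ ((1+t)^nd / t^(d-1)) / 2^nd :=
            div_le_div_of_nonneg_right (head_le nd d t ht0 ht1.le hd) (by positivity)
        _ = ((1+t)/2)^nd / t^(d-1) := by
            rw [div_pow]
            ring
        _ ≤ ((1+t)/2)^nd / t ^ (l * (nd:ℝ)) := by
            have hexp : t ^ (l * (nd:ℝ)) ≤ t ^ ((d-1:ℕ)) := by
              have h9 : t ^ (l * (nd:ℝ)) ≤ t ^ (((d-1:ℕ)):ℝ) := by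
                apply Real.rpow_le_rpow_of_exponent_ge ht0 ht1.le
                rw [hcastd]
                exact hdln
              rwa [Real.rpow_natCast t (d-1)] at h9
            exact div_le_div_of_nonneg_left (by positivity)
              (Real.rpow_pos_of_pos ht0 _) hexp
        _ = q ^ nd := by
            have hq' : q ^ nd = ((1+t)/2)^nd / t ^ (l * (nd:ℝ)) := by
              rw [hqdef, div_pow, ← Real.rpow_natCast (t ^ l) nd,
                ← Real.rpow_mul ht0.le]
            rw [hq']
    have h0le : ∀ d : ℕ, 0 ≤ sepProb d ⌈(d : ℝ) / l⌉₊ := fun d => ENNReal.toReal_nonneg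
    apply squeeze_zero' (Eventually.of_forall h0le) hbound
    exact (tendsto_pow_atTop_nhds_zero_of_lt_one hq0 hq1).comp hn_tendsto
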